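/- arXiv:math/0609268 — 3 statements merged into one kernel-verified Lean document; each statement's English description precedes it below -/
import Mathlib

section
/- Let 0 < a < b and θ₁ < θ₂ < θ₃ < θ₄ in [0,2π). The error vector (1/(ia) - 1/(ib))·((exp(iθ₂) - exp(iθ₁)) + (exp(iθ₄) - exp(iθ₃))) vanishes if and only if θ₃ - θ₂ = (θ₁ + 2π) - θ₄ and θ₂ - θ₁ = θ₄ - θ₃, i.e., opposite arcs have equal length. -/
open Complex Real

private lemma exp_add_exp (x y : ℝ) :
    Complex.exp (x * Complex.I) + Complex.exp (y * Complex.I)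
      = 2 * (Real.cos ((x - y)/2) : ℂ) * Complex.exp ((((x+y)/2 : ℝ)) * Complex.I) := by
  rw [Complex.exp_mul_I, Complex.exp_mul_I, Complex.exp_mul_I]
  have hc := Complex.cos_add_cos (x:ℂ) (y:ℂ)
  have hs := Complex.sin_add_sin (x:ℂ) (y:ℂ)
  push_cast [Complex.ofReal_cos]
  linear_combination hc + Complex.I * hs

private lemma cos_zero_interval {x : ℝ} (h1 : -Real.pi < x) (h2 : x < 0)
    (h : Real.cos x = 0) : x = -(Real.pi/2) := by
  obtain ⟨k, hk⟩ := Real.cos_eq_zero_iff.mp h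
  have hπ := Real.pi_pos
  have hlt : 2*(k:ℝ)+1 < 0 := by
    by_contra hcon; push_neg at hcon; nlinarith
  have hgt : (-2:ℝ) < 2*(k:ℝ)+1 := by
    by_contra hcon; push_neg at hcon; nlinarith
  have hk1 : k = -1 := by
    have h1' : 2*k+1 < 0 := by exact_mod_cast hlt
    have h2' : (-2:ℤ) < 2*k+1 := by exact_mod_cast hgt
    omega
  rw [hk1] at hk
  push_cast at hk
  linarith

/-- The error vector vanishes iff opposite arcs have equal length. -/
theorem error_vector_zero_iff_opposite_arcs_equal
    (a b θ₁ θ₂ θ₃ θ₄ : ℝ)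
    (ha : 0 < a) (hab : a < b)
    (h0 : 0 ≤ θ₁) (h12 : θ₁ < θ₂) (h23 : θ₂ < θ₃) (h34 : θ₃ < θ₄)
    (h4 : θ₄ < 2 * Real.pi) :
    (1 / (Complex.I * a) - 1 / (Complex.I * b)) *
        ((Complex.exp (θ₂ * Complex.I) - Complex.exp (θ₁ * Complex.I)) +
         (Complex.exp (θ₄ * Complex.I) - Complex.exp (θ₃ * Complex.I))) = 0
      ↔ (θ₃ - θ₂ = (θ₁ + 2 * Real.pi) - θ₄ ∧ θ₂ - θ₁ = θ₄ - θ₃) := by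
  have hπ := Real.pi_pos
  have ha' : (a:ℂ) ≠ 0 := by exact_mod_cast ha.ne'
  have hb' : (b:ℂ) ≠ 0 := by
    have : (0:ℝ) < b := ha.trans hab
    exact_mod_cast this.ne'
  have hab' : (a:ℂ) ≠ (b:ℂ) := by exact_mod_cast hab.ne
  have hscalar : (1 / (Complex.I * a) - 1 / (Complex.I * b)) ≠ 0 := by
    intro h
    apply hab'
    field_simp at h
    have h2 : Complex.I * b = Complex.I * a := by simp only [mul_zero, sub_eq_zero] at h; rw [h]
    exact (mul_left_cancel₀ Complex.I_ne_zero h2).symm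
  constructor
  · intro h
    have hsum : (Complex.exp (θ₂ * Complex.I) - Complex.exp (θ₁ * Complex.I)) +
         (Complex.exp (θ₄ * Complex.I) - Complex.exp (θ₃ * Complex.I)) = 0 :=
      (mul_eq_zero.mp h).resolve_left hscalar
    have heq : Complex.exp (θ₂ * Complex.I) + Complex.exp (θ₄ * Complex.I)
        = Complex.exp (θ₁ * Complex.I) + Complex.exp (θ₃ * Complex.I) := by
      linear_combination hsum
    rw [exp_add_exp θ₂ θ₄, exp_add_exp θ₁ θ₃] at heq
    set c₁ : ℝ := Real.cos ((θ₁ - θ₃)/2) with hc₁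
    set c₂ : ℝ := Real.cos ((θ₂ - θ₄)/2) with hc₂
    set δ : ℝ := (θ₁+θ₃)/2 - (θ₂+θ₄)/2 with hδ
    have hδ1 : -Real.pi < δ := by simp only [hδ]; linarith
    have hδ2 : δ < 0 := by simp only [hδ]; linarith
    have key : (c₂:ℂ) = (c₁:ℂ) * Complex.exp ((δ:ℝ) * Complex.I) := by
      have hm : Complex.exp (((θ₂+θ₄)/2 : ℝ) * Complex.I) ≠ 0 := Complex.exp_ne_zero _
      apply mul_right_cancel₀ hm
      have hsplit : Complex.exp (((θ₁+θ₃)/2 : ℝ) * Complex.I)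
          = Complex.exp ((δ:ℝ) * Complex.I) * Complex.exp (((θ₂+θ₄)/2 : ℝ) * Complex.I) := by
        rw [← Complex.exp_add]
        congr 1
        rw [hδ]
        push_cast
        ring
      rw [hsplit] at heq
      linear_combination heq / 2
    have him : c₁ * Real.sin δ = 0 := by
      have := congrArg Complex.im key
      simpa [Complex.exp_mul_I, Complex.mul_im, Complex.sin_ofReal_re, Complex.cos_ofReal_re] using this.symm
    have hre : c₂ = c₁ * Real.cos δ := by
      have := congrArg Complex.re key
      simpa [Complex.exp_mul_I, Complex.mul_re, Complex.sin_ofReal_re, Complex.cos_ofReal_re] using this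
    have hsin : Real.sin δ ≠ 0 := by
      have : 0 < Real.sin (-δ) := Real.sin_pos_of_pos_of_lt_pi (by linarith) (by linarith)
      rw [Real.sin_neg] at this
      linarith
    have hc1z : c₁ = 0 := by
      rcases mul_eq_zero.mp him with h' | h'
      · exact h'
      · exact absurd h' hsin
    have hc2z : c₂ = 0 := by rw [hre, hc1z, zero_mul]
    have h31 : (θ₁ - θ₃)/2 = -(Real.pi/2) :=
      cos_zero_interval (by linarith) (by linarith) hc1z
    have h42 : (θ₂ - θ₄)/2 = -(Real.pi/2) :=
      cos_zero_interval (by linarith) (by linarith) hc2z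
    constructor <;> linarith
  · rintro ⟨hA, hB⟩
    have h3 : θ₃ = θ₁ + Real.pi := by linarith
    have h4' : θ₄ = θ₂ + Real.pi := by linarith
    have e3 : Complex.exp (θ₃ * Complex.I) = -Complex.exp (θ₁ * Complex.I) := by
      rw [h3]
      push_cast
      rw [add_mul, Complex.exp_add, Complex.exp_pi_mul_I]
      ring
    have e4 : Complex.exp (θ₄ * Complex.I) = -Complex.exp (θ₂ * Complex.I) := by
      rw [h4']
      push_cast
      rw [add_mul, Complex.exp_add, Complex.exp_pi_mul_I]
      ring
    rw [e3, e4]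
    ring
end

section
/- Let CS₀ be the set of 4-tuples (p₁,p₂,p₃,p₄) of distinct points in counterclockwise order on the unit circle with p₃ = -p₁ and p₄ = -p₂, and let D = {g_β : |β| < 1} be the set of special Möbius transformations. Then the evaluation map (P, g_β) ↦ (g_β(p₁), g_β(p₂), g_β(p₃), g_β(p₄)) from CS₀ × D to the configuration space CS of ordered 4-tuples of distinct points on the circle in counterclockwise order is a bijection. -/
open Complex

/-- The special Möbius transformation `g_β`. -/
noncomputable def moebius (β z : ℂ) : ℂ := (z - β) / (1 - (starRingEnd ℂ) β * z)

/-- Ordered 4-tuples of distinct points on the unit circle in counterclockwise order. -/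
def inCCWOrder (P : ℂ × ℂ × ℂ × ℂ) : Prop :=
  ‖P.1‖ = 1 ∧
    ∃ θ₂ θ₃ θ₄ : ℝ, 0 < θ₂ ∧ θ₂ < θ₃ ∧ θ₃ < θ₄ ∧ θ₄ < 2 * Real.pi ∧
      P.2.1 = P.1 * Complex.exp (θ₂ * Complex.I) ∧
      P.2.2.1 = P.1 * Complex.exp (θ₃ * Complex.I) ∧
      P.2.2.2 = P.1 * Complex.exp (θ₄ * Complex.I)

/-- The configuration space `CS`. -/
def CS : Set (ℂ × ℂ × ℂ × ℂ) := {P | inCCWOrder P}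

/-- The core `CS₀`: configurations whose opposite points are antipodal. -/
def CScore : Set (ℂ × ℂ × ℂ × ℂ) :=
  {P ∈ CS | P.2.2.1 = -P.1 ∧ P.2.2.2 = -P.2.1}

/-!
A Möbius map `g_β`, `‖β‖ < 1`, is inverted by `g_{-β}`, and on the circle
`g_β z = z · w̄ / w` with `w = 1 - β̄ z` in the right half-plane; so
`θ ↦ θ - 2 arg (1 - β̄ e^{iθ})` is a continuous lift of `g_β` of degree one, and an injective
circle map with such a lift preserves the counterclockwise order. The theorem thus reduces to:
every `Q ∈ CS` has exactly one `β` in the unit disc with `g_{-β} Q ∈ CS₀`.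

For `Q = (q₁, q₂, q₃, q₄)` put `D = q₁q₃ - q₂q₄` and `N = (q₁ + q₃)q₂q₄ - (q₂ + q₄)q₁q₃`.
Using `q̄ = q⁻¹`, the two antipodality conditions on `g_{-β} Q` are equivalent to
`β · 2D = (1 + |β|²) N`, and `(|D|² - |N|²) q₁q₂q₃q₄ = (q₁ - q₂)(q₂ - q₃)(q₃ - q₄)(q₁ - q₄)`,
which for a counterclockwise `Q` equals `16 q₁q₂q₃q₄` times a product of four positive sines of
half-arcs. Hence `A = N / 2D` has `|A| < 1/2`, and `β = (1 + |β|²) A` has exactly one solution in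
the disc, because `|β|` must be the unique root in `[0, 1)` of `r = (1 + r²)|A|`.
-/

open ComplexConjugate Metric Set
open scoped Real

lemma one_sub_conj_mul_mem_slitPlane {β z : ℂ} (hβ : ‖β‖ < 1) (hz : ‖z‖ ≤ 1) :
    1 - conj β * z ∈ slitPlane := by
  rw [sub_eq_add_neg]
  refine mem_slitPlane_of_norm_lt_one ?_
  rw [norm_neg, norm_mul, Complex.norm_conj]
  nlinarith [norm_nonneg β, norm_nonneg z]

lemma moebius_denom_ne_zero {β z : ℂ} (hβ : ‖β‖ < 1) (hz : ‖z‖ ≤ 1) :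
    1 - conj β * z ≠ 0 :=
  slitPlane_ne_zero (one_sub_conj_mul_mem_slitPlane hβ hz)

lemma moebius_neg_moebius {β z : ℂ} (hβ : ‖β‖ < 1) (hz : ‖z‖ ≤ 1) :
    moebius (-β) (moebius β z) = z := by
  have hd := moebius_denom_ne_zero hβ hz
  have hd' : 1 - z * conj β ≠ 0 := by rwa [mul_comm]
  have hββ := moebius_denom_ne_zero hβ hβ.le
  have hnum : moebius β z - -β = z * (1 - conj β * β) / (1 - conj β * z) := by
    rw [moebius]; field_simp; ring
  have hden : 1 - conj (-β) * moebius β z = (1 - conj β * β) / (1 - conj β * z) := by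
    rw [moebius, map_neg]; field_simp; ring
  rw [moebius, hnum, hden, div_div_div_cancel_right₀ hd, mul_div_assoc, div_self hββ, mul_one]

lemma moebius_eq_mul_conj_div {β z : ℂ} (hz : ‖z‖ = 1) :
    moebius β z = z * conj (1 - conj β * z) / (1 - conj β * z) := by
  have hzz : z * conj z = 1 := by
    rw [mul_conj', hz, ofReal_one, one_pow]
  rw [moebius, map_sub, map_one, map_mul, Complex.conj_conj]
  congr 1
  linear_combination β * hzz

noncomputable def moebiusLift (β : ℂ) (θ : ℝ) : ℝ :=
  θ - 2 * arg (1 - conj β * exp (θ * I))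

lemma exp_moebiusLift_mul_I {β : ℂ} (hβ : ‖β‖ < 1) (θ : ℝ) :
    exp (moebiusLift β θ * I) = moebius β (exp (θ * I)) := by
  have hz := norm_exp_ofReal_mul_I θ
  set w := 1 - conj β * exp (θ * I) with hw
  have hw0 : w ≠ 0 := moebius_denom_ne_zero hβ hz.le
  have hpolar : ‖w‖ * exp (arg w * I) = w := norm_mul_exp_arg_mul_I w
  have hconj : conj w = ‖w‖ * exp (-arg w * I) := by
    conv_lhs => rw [← hpolar]
    rw [map_mul, conj_ofReal, ← exp_conj, map_mul, conj_ofReal, conj_I, neg_mul, mul_neg]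
  rw [moebius_eq_mul_conj_div hz, ← hw, eq_div_iff hw0, hconj, moebiusLift, ← hw]
  calc exp (↑(θ - 2 * arg w) * I) * w
      = exp (↑(θ - 2 * arg w) * I) * (‖w‖ * exp (arg w * I)) := by rw [hpolar]
    _ = exp (θ * I) * (‖w‖ * exp (-arg w * I)) := by
      rw [mul_left_comm, ← Complex.exp_add, mul_left_comm, ← Complex.exp_add]
      congr 2
      push_cast
      ring

lemma continuous_moebiusLift {β : ℂ} (hβ : ‖β‖ < 1) : Continuous (moebiusLift β) :=
  continuous_id.sub <| continuous_const.mul <| continuous_iff_continuousAt.2 fun θ =>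
    (continuousAt_arg (one_sub_conj_mul_mem_slitPlane hβ (norm_exp_ofReal_mul_I θ).le)).comp
      (f := fun θ : ℝ => 1 - conj β * exp (θ * I)) (by fun_prop)

lemma moebiusLift_add_two_pi (β : ℂ) (θ : ℝ) :
    moebiusLift β (θ + 2 * π) = moebiusLift β θ + 2 * π := by
  have hexp : exp (((θ + 2 * π : ℝ) : ℂ) * I) = exp (θ * I) := by
    push_cast
    rw [add_mul, Complex.exp_add, exp_two_pi_mul_I, mul_one]
  rw [moebiusLift, moebiusLift, hexp]
  ring

def quadMap {α β : Type*} (f : α → β) (P : α × α × α × α) : β × β × β × β :=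
  (f P.1, f P.2.1, f P.2.2.1, f P.2.2.2)

lemma mem_CS_iff {P : ℂ × ℂ × ℂ × ℂ} :
    P ∈ CS ↔ ∃ α θ₂ θ₃ θ₄ : ℝ, 0 < θ₂ ∧ θ₂ < θ₃ ∧ θ₃ < θ₄ ∧ θ₄ < 2 * π ∧
      P = (exp (α * I), exp ((α + θ₂ : ℝ) * I), exp ((α + θ₃ : ℝ) * I),
        exp ((α + θ₄ : ℝ) * I)) := by
  obtain ⟨p₁, p₂, p₃, p₄⟩ := P
  constructor
  · rintro ⟨h₁, θ₂, θ₃, θ₄, h₂, h₃, h₄, h₅, e₂, e₃, e₄⟩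
    have hp₁ : p₁ = exp (arg p₁ * I) := by
      simpa [h₁] using (norm_mul_exp_arg_mul_I p₁).symm
    dsimp only at e₂ e₃ e₄
    subst e₂ e₃ e₄
    refine ⟨arg p₁, θ₂, θ₃, θ₄, h₂, h₃, h₄, h₅, ?_⟩
    simp only [ofReal_add, add_mul, Complex.exp_add, ← hp₁]
  · rintro ⟨α, θ₂, θ₃, θ₄, h₂, h₃, h₄, h₅, hP⟩
    simp only [Prod.mk.injEq] at hP
    obtain ⟨rfl, rfl, rfl, rfl⟩ := hP
    refine ⟨norm_exp_ofReal_mul_I α, θ₂, θ₃, θ₄, h₂, h₃, h₄, h₅, ?_, ?_, ?_⟩ <;>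
      simp only [ofReal_add, add_mul, Complex.exp_add]

lemma strictMonoOn_Icc_of_lift {h : ℂ → ℂ} {f : ℝ → ℝ} (hf : Continuous f)
    (hper : ∀ θ, f (θ + 2 * π) = f θ + 2 * π) (hlift : ∀ θ : ℝ, exp (f θ * I) = h (exp (θ * I)))
    (hinj : InjOn h (sphere 0 1)) (α : ℝ) : StrictMonoOn f (Icc α (α + 2 * π)) := by
  have hπ := Real.pi_pos
  refine hf.continuousOn.strictMonoOn_of_injOn_Icc (by linarith) (by rw [hper]; linarith)
    fun x hx y hy hfxy => ?_
  have hexp : exp (x * I) = exp (y * I) :=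
    hinj (mem_sphere_zero_iff_norm.2 (norm_exp_ofReal_mul_I x))
      (mem_sphere_zero_iff_norm.2 (norm_exp_ofReal_mul_I y)) (by rw [← hlift, ← hlift, hfxy])
  obtain ⟨n, hn⟩ := Complex.exp_eq_exp_iff_exists_int.1 hexp
  have hx_eq : x = y + n * (2 * π) := by simpa using congrArg im hn
  have hn₁ : -1 ≤ n := by
    have : (-1 : ℝ) ≤ n := by nlinarith [hx.1, hy.2]
    exact_mod_cast this
  have hn₂ : n ≤ 1 := by
    have : (n : ℝ) ≤ 1 := by nlinarith [hx.2, hy.1]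
    exact_mod_cast this
  interval_cases n
  · have := hper x
    rw [show x + 2 * π = y by push_cast at hx_eq; linarith] at this
    linarith
  · simpa using hx_eq
  · have := hper y
    rw [show y + 2 * π = x by push_cast at hx_eq; linarith] at this
    linarith

lemma mapsTo_quadMap_CS_of_lift {h : ℂ → ℂ} {f : ℝ → ℝ} (hf : Continuous f)
    (hper : ∀ θ, f (θ + 2 * π) = f θ + 2 * π) (hlift : ∀ θ : ℝ, exp (f θ * I) = h (exp (θ * I)))
    (hinj : InjOn h (sphere 0 1)) : MapsTo (quadMap h) CS CS := by
  intro P hP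
  obtain ⟨α, θ₂, θ₃, θ₄, h₂, h₃, h₄, h₅, rfl⟩ := mem_CS_iff.1 hP
  have hmono := strictMonoOn_Icc_of_lift hf hper hlift hinj α
  have mem : ∀ θ, 0 ≤ θ → θ ≤ 2 * π → α + θ ∈ Icc α (α + 2 * π) := fun θ h₀ h₁ =>
    ⟨by linarith, by linarith⟩
  have l₂ : f α < f (α + θ₂) := by
    simpa using hmono (mem 0 le_rfl (by positivity)) (mem θ₂ h₂.le (by linarith)) (by linarith)
  have l₃ : f (α + θ₂) < f (α + θ₃) :=
    hmono (mem θ₂ h₂.le (by linarith)) (mem θ₃ (by linarith) (by linarith)) (by linarith)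
  have l₄ : f (α + θ₃) < f (α + θ₄) :=
    hmono (mem θ₃ (by linarith) (by linarith)) (mem θ₄ (by linarith) h₅.le) (by linarith)
  have l₅ : f (α + θ₄) < f α + 2 * π := by
    rw [← hper]
    exact hmono (mem θ₄ (by linarith) h₅.le) (mem _ (by positivity) le_rfl) (by linarith)
  rw [mem_CS_iff]
  refine ⟨f α, f (α + θ₂) - f α, f (α + θ₃) - f α, f (α + θ₄) - f α,
    by linarith, by linarith, by linarith, by linarith, ?_⟩
  simp only [quadMap, ← hlift, add_sub_cancel]

lemma mapsTo_quadMap_moebius_CS {β : ℂ} (hβ : ‖β‖ < 1) : MapsTo (quadMap (moebius β)) CS CS :=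
  mapsTo_quadMap_CS_of_lift (continuous_moebiusLift hβ) (moebiusLift_add_two_pi β)
    (exp_moebiusLift_mul_I hβ) <| LeftInvOn.injOn (f₁' := moebius (-β)) fun _ hz =>
      moebius_neg_moebius hβ (mem_sphere_zero_iff_norm.1 hz).le

lemma quadMap_moebius_neg_quadMap_moebius {β : ℂ} (hβ : ‖β‖ < 1) {P : ℂ × ℂ × ℂ × ℂ}
    (hP : P ∈ CS) : quadMap (moebius (-β)) (quadMap (moebius β) P) = P := by
  obtain ⟨α, θ₂, θ₃, θ₄, -, -, -, -, rfl⟩ := mem_CS_iff.1 hP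
  simp only [quadMap, moebius_neg_moebius hβ (norm_exp_ofReal_mul_I _).le]

lemma exp_mul_I_sub_exp_mul_I (a b : ℝ) :
    exp (a * I) - exp (b * I) = -2 * I * Real.sin ((b - a) / 2) * exp (((a + b) / 2 : ℝ) * I) := by
  have ha : exp (a * I) = exp (-((b - a) / 2 : ℝ) * I) * exp (((a + b) / 2 : ℝ) * I) := by
    rw [← Complex.exp_add]; congr 1; push_cast; ring
  have hb : exp (b * I) = exp (((b - a) / 2 : ℝ) * I) * exp (((a + b) / 2 : ℝ) * I) := by
    rw [← Complex.exp_add]; congr 1; push_cast; ring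
  rw [ha, hb, ofReal_sin, Complex.sin]
  linear_combination (exp (-((b - a) / 2 : ℝ) * I) - exp (((b - a) / 2 : ℝ) * I)) *
    exp (((a + b) / 2 : ℝ) * I) * I_sq

def quadD (q₁ q₂ q₃ q₄ : ℂ) : ℂ := q₁ * q₃ - q₂ * q₄

def quadN (q₁ q₂ q₃ q₄ : ℂ) : ℂ := (q₁ + q₃) * (q₂ * q₄) - (q₂ + q₄) * (q₁ * q₃)

lemma conj_quadD_mul {q₁ q₂ q₃ q₄ : ℂ} (h₁ : ‖q₁‖ = 1) (h₂ : ‖q₂‖ = 1) (h₃ : ‖q₃‖ = 1)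
    (h₄ : ‖q₄‖ = 1) : conj (quadD q₁ q₂ q₃ q₄) * (q₁ * q₂ * q₃ * q₄) = -quadD q₁ q₂ q₃ q₄ := by
  have := norm_ne_zero_iff.1 (h₁ ▸ one_ne_zero)
  have := norm_ne_zero_iff.1 (h₂ ▸ one_ne_zero)
  have := norm_ne_zero_iff.1 (h₃ ▸ one_ne_zero)
  have := norm_ne_zero_iff.1 (h₄ ▸ one_ne_zero)
  simp only [quadD, map_sub, map_mul, ← inv_eq_conj h₁, ← inv_eq_conj h₂, ← inv_eq_conj h₃,
    ← inv_eq_conj h₄]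
  field_simp
  ring

lemma conj_quadN_mul {q₁ q₂ q₃ q₄ : ℂ} (h₁ : ‖q₁‖ = 1) (h₂ : ‖q₂‖ = 1) (h₃ : ‖q₃‖ = 1)
    (h₄ : ‖q₄‖ = 1) :
    conj (quadN q₁ q₂ q₃ q₄) * (q₁ * q₂ * q₃ * q₄) = (q₁ + q₃) - (q₂ + q₄) := by
  have := norm_ne_zero_iff.1 (h₁ ▸ one_ne_zero)
  have := norm_ne_zero_iff.1 (h₂ ▸ one_ne_zero)
  have := norm_ne_zero_iff.1 (h₃ ▸ one_ne_zero)
  have := norm_ne_zero_iff.1 (h₄ ▸ one_ne_zero)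
  simp only [quadN, map_sub, map_add, map_mul, ← inv_eq_conj h₁, ← inv_eq_conj h₂,
    ← inv_eq_conj h₃, ← inv_eq_conj h₄]
  field_simp
  ring

lemma normSq_quadD_sub_normSq_quadN_mul {q₁ q₂ q₃ q₄ : ℂ} (h₁ : ‖q₁‖ = 1) (h₂ : ‖q₂‖ = 1)
    (h₃ : ‖q₃‖ = 1) (h₄ : ‖q₄‖ = 1) :
    ((normSq (quadD q₁ q₂ q₃ q₄) - normSq (quadN q₁ q₂ q₃ q₄) : ℝ) : ℂ) * (q₁ * q₂ * q₃ * q₄) =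
      (q₁ - q₂) * (q₂ - q₃) * (q₃ - q₄) * (q₁ - q₄) := by
  push_cast
  rw [← mul_conj, ← mul_conj]
  linear_combination (norm := (simp only [quadD, quadN]; ring))
    quadD q₁ q₂ q₃ q₄ * conj_quadD_mul h₁ h₂ h₃ h₄ -
      quadN q₁ q₂ q₃ q₄ * conj_quadN_mul h₁ h₂ h₃ h₄

lemma norm_quadN_lt_norm_quadD {Q : ℂ × ℂ × ℂ × ℂ} (hQ : Q ∈ CS) :
    ‖quadN Q.1 Q.2.1 Q.2.2.1 Q.2.2.2‖ < ‖quadD Q.1 Q.2.1 Q.2.2.1 Q.2.2.2‖ := by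
  obtain ⟨α, θ₂, θ₃, θ₄, h₂, h₃, h₄, h₅, rfl⟩ := mem_CS_iff.1 hQ
  have hπ := Real.pi_pos
  have hsin : ∀ a b : ℝ, a < b → b < a + 2 * π → 0 < Real.sin ((b - a) / 2) := fun a b hab hba =>
    Real.sin_pos_of_pos_of_lt_pi (by linarith) (by linarith)
  set s := Real.sin ((α + θ₂ - α) / 2) * Real.sin ((α + θ₃ - (α + θ₂)) / 2) *
    Real.sin ((α + θ₄ - (α + θ₃)) / 2) * Real.sin ((α + θ₄ - α) / 2) with hs
  have hs_pos : 0 < s := by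
    have := hsin α (α + θ₂) (by linarith) (by linarith)
    have := hsin (α + θ₂) (α + θ₃) (by linarith) (by linarith)
    have := hsin (α + θ₃) (α + θ₄) (by linarith) (by linarith)
    have := hsin α (α + θ₄) (by linarith) (by linarith)
    positivity
  dsimp only
  set q₁ := exp (α * I)
  set q₂ := exp ((α + θ₂ : ℝ) * I)
  set q₃ := exp ((α + θ₃ : ℝ) * I)
  set q₄ := exp ((α + θ₄ : ℝ) * I)
  have hprod : q₁ * q₂ * q₃ * q₄ = exp (((α + (α + θ₂)) / 2 : ℝ) * I) *
      exp ((((α + θ₂) + (α + θ₃)) / 2 : ℝ) * I) * exp ((((α + θ₃) + (α + θ₄)) / 2 : ℝ) * I) *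
      exp (((α + (α + θ₄)) / 2 : ℝ) * I) := by
    simp only [q₁, q₂, q₃, q₄, ← Complex.exp_add]
    congr 1
    push_cast
    ring
  have hdiff : ((normSq (quadD q₁ q₂ q₃ q₄) - normSq (quadN q₁ q₂ q₃ q₄) : ℝ) : ℂ) *
      (q₁ * q₂ * q₃ * q₄) = ((16 * s : ℝ) : ℂ) * (q₁ * q₂ * q₃ * q₄) := by
    rw [normSq_quadD_sub_normSq_quadN_mul (norm_exp_ofReal_mul_I _) (norm_exp_ofReal_mul_I _)
      (norm_exp_ofReal_mul_I _) (norm_exp_ofReal_mul_I _)]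
    simp only [q₁, q₂, q₃, q₄, exp_mul_I_sub_exp_mul_I]
    rw [hprod, hs]
    push_cast
    ring_nf
    rw [I_pow_four, one_mul]
  have hD : normSq (quadN q₁ q₂ q₃ q₄) < normSq (quadD q₁ q₂ q₃ q₄) := by
    have := mul_right_cancel₀ (by simp [q₁, q₂, q₃, q₄]) hdiff
    norm_cast at this
    linarith
  simpa only [normSq_eq_norm_sq, sq_lt_sq₀ (norm_nonneg _) (norm_nonneg _)] using hD

lemma moebius_neg_eq_neg_moebius_neg_iff {β q₁ q₃ : ℂ} (hβ : ‖β‖ < 1) (h₁ : ‖q₁‖ ≤ 1)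
    (h₃ : ‖q₃‖ ≤ 1) : moebius (-β) q₃ = -moebius (-β) q₁ ↔
      (q₁ + q₃) * (1 + conj β * β) + 2 * β + 2 * conj β * (q₁ * q₃) = 0 := by
  have hβ' : ‖-β‖ < 1 := by rwa [norm_neg]
  rw [moebius, moebius, ← neg_div,
    div_eq_div_iff (moebius_denom_ne_zero hβ' h₃) (moebius_denom_ne_zero hβ' h₁), map_neg]
  constructor <;> intro h <;> linear_combination h

lemma antipodal_equations_iff {β q₁ q₂ q₃ q₄ : ℂ} (h₁ : ‖q₁‖ = 1) (h₂ : ‖q₂‖ = 1)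
    (h₃ : ‖q₃‖ = 1) (h₄ : ‖q₄‖ = 1) (hD : quadD q₁ q₂ q₃ q₄ ≠ 0) :
    ((q₁ + q₃) * (1 + conj β * β) + 2 * β + 2 * conj β * (q₁ * q₃) = 0 ∧
      (q₂ + q₄) * (1 + conj β * β) + 2 * β + 2 * conj β * (q₂ * q₄) = 0) ↔
      β * (2 * quadD q₁ q₂ q₃ q₄) = (1 + conj β * β) * quadN q₁ q₂ q₃ q₄ := by
  constructor
  · rintro ⟨e₁, e₂⟩
    linear_combination (norm := (simp only [quadD, quadN]; ring)) (q₁ * q₃) * e₂ - (q₂ * q₄) * e₁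
  · intro h
    have hc : conj β * (2 * -quadD q₁ q₂ q₃ q₄) =
        (1 + conj β * β) * ((q₁ + q₃) - (q₂ + q₄)) := by
      rw [← conj_quadD_mul h₁ h₂ h₃ h₄, ← conj_quadN_mul h₁ h₂ h₃ h₄]
      have := congrArg (fun z => conj z * (q₁ * q₂ * q₃ * q₄)) h
      simp only [map_mul, map_add, map_one, map_ofNat, conj_conj] at this
      linear_combination this
    constructor
    · refine (mul_eq_zero.1 ?_).resolve_right hD
      linear_combination (norm := (simp only [quadD, quadN]; ring)) h - q₁ * q₃ * hc
    · refine (mul_eq_zero.1 ?_).resolve_right hD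
      linear_combination (norm := (simp only [quadD, quadN]; ring)) h - q₂ * q₄ * hc

lemma existsUnique_mem_ball_eq_one_add_conj_mul_self_mul {A : ℂ} (hA : ‖A‖ < 1 / 2) :
    ∃! β : ℂ, β ∈ ball (0 : ℂ) 1 ∧ β = (1 + conj β * β) * A := by
  simp only [mem_ball_zero_iff, conj_mul']
  refine existsUnique_of_exists_of_unique ?_ ?_
  · set S := √(1 - 4 * ‖A‖ ^ 2)
    have hS0 : 0 ≤ S := Real.sqrt_nonneg _
    have hS : S ^ 2 = 1 - 4 * ‖A‖ ^ 2 := Real.sq_sqrt (by nlinarith [norm_nonneg A])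
    have hT : 2 / (1 + S) = 1 + (2 / (1 + S) * ‖A‖) ^ 2 := by
      field_simp
      linear_combination -hS
    have hT2 : 2 / (1 + S) ≤ 2 := div_le_self zero_le_two (by linarith)
    refine ⟨(2 / (1 + S) : ℝ) * A, ?_, ?_⟩
    · rw [norm_mul, norm_real, Real.norm_of_nonneg (by positivity)]
      nlinarith [norm_nonneg A]
    · rw [norm_mul, norm_real, Real.norm_of_nonneg (by positivity)]
      conv_lhs => rw [hT]
      push_cast
      ring
  · rintro β γ ⟨hβ, eβ⟩ ⟨hγ, eγ⟩
    have norm_eq : ∀ {δ : ℂ}, δ = (1 + ‖δ‖ ^ 2) * A → ‖δ‖ = (1 + ‖δ‖ ^ 2) * ‖A‖ := fun {δ} e => by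
      conv_lhs => rw [e]
      rw [norm_mul, ← ofReal_pow, ← ofReal_one, ← ofReal_add, norm_real,
        Real.norm_of_nonneg (by positivity)]
    have hr := norm_eq eβ
    have hs := norm_eq eγ
    have hrs : (‖β‖ - ‖γ‖) * (1 - ‖β‖ * ‖γ‖) = 0 := by
      linear_combination (1 + ‖γ‖ ^ 2) * hr - (1 + ‖β‖ ^ 2) * hs
    have hnorm : ‖β‖ = ‖γ‖ := by
      rcases mul_eq_zero.1 hrs with h | h
      · linarith
      · nlinarith [norm_nonneg β, norm_nonneg γ]
    rw [eβ, eγ, hnorm]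

lemma existsUnique_quadMap_moebius_neg_mem_CScore {Q : ℂ × ℂ × ℂ × ℂ} (hQ : Q ∈ CS) :
    ∃! β : ℂ, β ∈ ball (0 : ℂ) 1 ∧ quadMap (moebius (-β)) Q ∈ CScore := by
  have hlt := norm_quadN_lt_norm_quadD hQ
  obtain ⟨q₁, q₂, q₃, q₄⟩ := Q
  obtain ⟨α, θ₂, θ₃, θ₄, -, -, -, -, hQ'⟩ := mem_CS_iff.1 hQ
  simp only [Prod.mk.injEq] at hQ'
  obtain ⟨h₁, h₂, h₃, h₄⟩ : ‖q₁‖ = 1 ∧ ‖q₂‖ = 1 ∧ ‖q₃‖ = 1 ∧ ‖q₄‖ = 1 := by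
    simp only [hQ', norm_exp_ofReal_mul_I, and_self]
  have hD : quadD q₁ q₂ q₃ q₄ ≠ 0 := norm_pos_iff.1 ((norm_nonneg _).trans_lt hlt)
  have hA : ‖quadN q₁ q₂ q₃ q₄ / (2 * quadD q₁ q₂ q₃ q₄)‖ < 1 / 2 := by
    rw [norm_div, norm_mul, Complex.norm_two, div_lt_iff₀ (by positivity)]
    linarith
  refine (existsUnique_congr fun β => and_congr_right fun hβ => ?_).2
    (existsUnique_mem_ball_eq_one_add_conj_mul_self_mul hA)
  rw [mem_ball_zero_iff] at hβ
  have hCS := mapsTo_quadMap_moebius_CS (β := -β) (by rwa [norm_neg]) hQ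
  rw [CScore, mem_sep_iff, and_iff_right hCS]
  simp only [quadMap]
  rw [moebius_neg_eq_neg_moebius_neg_iff hβ h₁.le h₃.le,
    moebius_neg_eq_neg_moebius_neg_iff hβ h₂.le h₄.le, antipodal_equations_iff h₁ h₂ h₃ h₄ hD,
    ← mul_div_assoc, eq_div_iff (mul_ne_zero two_ne_zero hD)]

/-- The evaluation map `(P, g_β) ↦ g_β(P)` is a bijection from
`CS₀ × D` onto `CS`. -/
theorem evaluation_map_bijective :
    Set.BijOn
      (fun Pβ : (ℂ × ℂ × ℂ × ℂ) × ℂ =>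
        (moebius Pβ.2 Pβ.1.1, moebius Pβ.2 Pβ.1.2.1,
         moebius Pβ.2 Pβ.1.2.2.1, moebius Pβ.2 Pβ.1.2.2.2))
      (CScore ×ˢ Metric.ball (0:ℂ) 1) CS := by
  refine ⟨?_, ?_, ?_⟩
  · rintro ⟨P, β⟩ ⟨hP, hβ⟩
    exact mapsTo_quadMap_moebius_CS (mem_ball_zero_iff.1 hβ) hP.1
  · rintro ⟨P, β⟩ ⟨hP, hβ⟩ ⟨P', β'⟩ ⟨hP', hβ'⟩ h
    dsimp only at hP hβ hP' hβ' h
    change quadMap (moebius β) P = quadMap (moebius β') P' at h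
    have hQ := mapsTo_quadMap_moebius_CS (mem_ball_zero_iff.1 hβ) hP.1
    have e := quadMap_moebius_neg_quadMap_moebius (mem_ball_zero_iff.1 hβ) hP.1
    have e' : quadMap (moebius (-β')) (quadMap (moebius β) P) = P' := by
      rw [h]
      exact quadMap_moebius_neg_quadMap_moebius (mem_ball_zero_iff.1 hβ') hP'.1
    obtain rfl : β = β' := (existsUnique_quadMap_moebius_neg_mem_CScore hQ).unique
      ⟨hβ, by rwa [e]⟩ ⟨hβ', by rwa [e']⟩
    rw [← e, ← e']
  · intro Q hQ
    obtain ⟨β, ⟨hβ, hP⟩, -⟩ := existsUnique_quadMap_moebius_neg_mem_CScore hQ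
    refine ⟨(quadMap (moebius (-β)) Q, β), ⟨hP, hβ⟩, ?_⟩
    show quadMap (moebius β) (quadMap (moebius (-β)) Q) = Q
    simpa only [neg_neg] using quadMap_moebius_neg_quadMap_moebius (β := -β)
      (by rwa [norm_neg, ← mem_ball_zero_iff]) hQ
end

section
/- Let E be a nonempty compact subset of ℝ² and let C be the boundary circle of its circumscribed (minimal enclosing) disk, with center c and radius R > 0. Then C ∩ E is not contained in any open semicircle of C; that is, there is no unit vector u such that every point p ∈ C ∩ E satisfies ⟨p - c, u⟩ > 0. -/
/-!
Moving the centre a little in the direction `u` strictly decreases the distance to every point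
`p` with `⟪p - c, u⟫ > 0`, at first order. By compactness, the points of `E` either have
`⟪p - c, u⟫` bounded below by some `m > 0` or lie at distance at most `R - m` from `c`, so a
small enough shift puts all of `E` in an open ball of radius `R`, hence in a closed ball of
smaller radius.
-/

open Metric Topology
open scoped RealInnerProductSpace

variable {V : Type*} [NormedAddCommGroup V] [InnerProductSpace ℝ V]

theorem dist_add_smul_lt_of_inner_sub_pos {p c u : V} {R ε : ℝ} (hp : dist p c ≤ R)
    (hε : 0 < ε) (h : ε * ‖u‖ ^ 2 < 2 * ⟪p - c, u⟫) : dist p (c + ε • u) < R := by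
  have hsq : dist p (c + ε • u) ^ 2 = dist p c ^ 2 - ε * (2 * ⟪p - c, u⟫ - ε * ‖u‖ ^ 2) := by
    rw [dist_eq_norm, dist_eq_norm, sub_add_eq_sub_sub, norm_sub_sq_real, inner_smul_right,
      norm_smul, Real.norm_of_nonneg hε.le]
    ring
  have hlt : dist p (c + ε • u) ^ 2 < R ^ 2 := by
    rw [hsq]
    nlinarith [mul_pos hε (sub_pos.2 h), dist_nonneg (x := p) (y := c)]
  exact lt_of_pow_lt_pow_left₀ 2 (dist_nonneg.trans hp) hlt

theorem IsCompact.exists_subset_ball_of_inner_sub_pos {E : Set V} (hE : IsCompact E) {c u : V}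
    {R : ℝ} (hsub : E ⊆ closedBall c R) (hu : ∀ p ∈ sphere c R ∩ E, 0 < ⟪p - c, u⟫) :
    ∃ c', E ⊆ ball c' R := by
  obtain ⟨m, hm, hmE⟩ : ∃ m, 0 < m ∧ ∀ p ∈ E, m ≤ max ⟪p - c, u⟫ (R - dist p c) := by
    refine hE.exists_forall_le' (by fun_prop) fun p hp => ?_
    rcases (mem_closedBall.1 (hsub hp)).lt_or_eq with hlt | heq
    · exact lt_max_of_lt_right (sub_pos.2 hlt)
    · exact lt_max_of_lt_left (hu p ⟨heq, hp⟩)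
  obtain ⟨ε, ⟨hεu, hεm⟩, hε⟩ : ∃ ε : ℝ, (ε * ‖u‖ ^ 2 < 2 * m ∧ ε * ‖u‖ < m) ∧ 0 < ε := by
    have hsmall : ∀ᶠ ε : ℝ in 𝓝 0, ε * ‖u‖ ^ 2 < 2 * m ∧ ε * ‖u‖ < m :=
      ((continuous_id.mul continuous_const).continuousAt.eventually_lt continuousAt_const
        (by simpa using hm)).and
      ((continuous_id.mul continuous_const).continuousAt.eventually_lt continuousAt_const
        (by simpa using hm))
    exact ((hsmall.filter_mono nhdsWithin_le_nhds).and self_mem_nhdsWithin).exists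
      (f := 𝓝[>] 0)
  refine ⟨c + ε • u, fun p hp => mem_ball.2 ?_⟩
  rcases le_max_iff.1 (hmE p hp) with hinner | hnear
  · exact dist_add_smul_lt_of_inner_sub_pos (hsub hp) hε (by linarith)
  · calc dist p (c + ε • u) ≤ dist p c + dist c (c + ε • u) := dist_triangle _ _ _
      _ = dist p c + ε * ‖u‖ := by
        rw [dist_self_add_right, norm_smul, Real.norm_of_nonneg hε.le]
      _ < R := by linarith

theorem circumscribed_intersection_not_in_open_semicircle_general
    (E : Set (EuclideanSpace ℝ (Fin 2))) (hE : IsCompact E)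
    (c : EuclideanSpace ℝ (Fin 2)) (R : ℝ)
    (hsub : E ⊆ Metric.closedBall c R)
    (hmin : ∀ (c' : EuclideanSpace ℝ (Fin 2)) (R' : ℝ),
      E ⊆ Metric.closedBall c' R' → R ≤ R') :
    ¬ ∃ u : EuclideanSpace ℝ (Fin 2), ‖u‖ = 1 ∧
        ∀ p ∈ Metric.sphere c R ∩ E, (0:ℝ) < inner ℝ (p - c) u := by
  rintro ⟨u, -, hu⟩
  obtain ⟨c', hc'⟩ := hE.exists_subset_ball_of_inner_sub_pos hsub hu
  obtain ⟨R', hR', hsub'⟩ := exists_lt_subset_ball hE.isClosed hc'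
  exact (hmin c' R' (hsub'.trans ball_subset_closedBall)).not_gt hR'

/-- The intersection of a compact set with its circumscribed circle cannot lie
in an open semicircle. -/
theorem circumscribed_intersection_not_in_open_semicircle
    (E : Set (EuclideanSpace ℝ (Fin 2))) (hne : E.Nonempty) (hE : IsCompact E)
    (c : EuclideanSpace ℝ (Fin 2)) (R : ℝ) (hR : 0 < R)
    (hsub : E ⊆ Metric.closedBall c R)
    (hmin : ∀ (c' : EuclideanSpace ℝ (Fin 2)) (R' : ℝ),
      E ⊆ Metric.closedBall c' R' → R ≤ R') :
    ¬ ∃ u : EuclideanSpace ℝ (Fin 2), ‖u‖ = 1 ∧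
        ∀ p ∈ Metric.sphere c R ∩ E, (0:ℝ) < inner ℝ (p - c) u :=
  circumscribed_intersection_not_in_open_semicircle_general E hE c R hsub hmin
end
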